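/- arXiv:2202.09514 — 2 statements merged into one kernel-verified Lean document; each statement's English description precedes it below -/
import Mathlib

section
/- Let f_pro, f_adv : Θ × Ψ → ℝ be payoff functions of a two-player game where the adversary's best-response set R(θ) = {ψ' ∈ Ψ | ∀ ψ ∈ Ψ, f_adv(θ, ψ') ≥ f_adv(θ, ψ)} is a singleton for every θ ∈ Θ. If (θ*, ψ*) is a Stackelberg equilibrium and (θᴺ, ψᴺ) is a Nash equilibrium, then f_pro(θ*, ψ*) ≥ f_pro(θᴺ, ψᴺ). -/
/-- In a two-player game where the adversary's best-response set is a singleton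
for every leader strategy, the protagonist's payoff at any Stackelberg equilibrium
is at least its payoff at any Nash equilibrium. -/
theorem stmt_0 {Θ Ψ : Type*} [Nonempty Θ] [Nonempty Ψ]
    (fpro fadv : Θ → Ψ → ℝ)
    (R : Θ → Set Ψ)
    (hR : ∀ θ, R θ = {ψ' | ∀ ψ, fadv θ ψ' ≥ fadv θ ψ})
    (hsingle : ∀ θ, ∃ a, R θ = {a})
    (θS : Θ) (ψS : Ψ)
    (hSE₁ : ψS ∈ R θS)
    (hSE₂ : ∀ θ, sInf ((fun ψ => fpro θS ψ) '' R θS) ≥ sInf ((fun ψ => fpro θ ψ) '' R θ))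
    (θN : Θ) (ψN : Ψ)
    (hNE₁ : ∀ θ, fpro θN ψN ≥ fpro θ ψN)
    (hNE₂ : ∀ ψ, fadv θN ψN ≥ fadv θN ψ) :
    fpro θS ψS ≥ fpro θN ψN := by
  have hψN : R θN = {ψN} := by
    obtain ⟨a, ha⟩ := hsingle θN
    have : ψN ∈ R θN := by rw [hR]; exact hNE₂
    rw [ha] at this ⊢
    simp_all
  have hψS : R θS = {ψS} := by
    obtain ⟨a, ha⟩ := hsingle θS
    rw [ha] at hSE₁ ⊢
    simp_all
  have h := hSE₂ θN
  rw [hψN, hψS] at h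
  simpa using h
end

section
/- Let g₁, g₂ ∈ ℝⁿ, let d* = α* g₁ + (1−α*) g₂ where α* minimizes ‖α g₁ + (1−α) g₂‖² over [0,1], and suppose d* ≠ 0. Then min(⟨d*, g₁⟩, ⟨d*, g₂⟩) ≥ ‖d*‖², so the direction d*/‖d*‖ has nonnegative inner product with both g₁ and g₂. -/
/-!
The minimal-norm point `d*` of the segment `[g₁, g₂]` is the projection of `0` onto that convex
set, so the variational inequality `⟪0 - d*, w - d*⟫ ≤ 0` holds for every `w` in the segment.
Taking `w = g₁` and `w = g₂` gives `‖d*‖² ≤ ⟪d*, gᵢ⟫`.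
-/

open RealInnerProductSpace

theorem sq_norm_le_inner_of_isMinOn_norm {F : Type*} [NormedAddCommGroup F]
    [InnerProductSpace ℝ F] {K : Set F} (hK : Convex ℝ K) {d : F} (hd : d ∈ K)
    (hmin : IsMinOn (‖·‖) K d) {w : F} (hw : w ∈ K) : ‖d‖ ^ 2 ≤ ⟪d, w⟫ := by
  have hproj : ‖0 - d‖ = ⨅ v : K, ‖0 - (v : F)‖ := by
    simpa only [zero_sub, norm_neg] using (hmin.iInf_eq hd).symm
  have hvar := (norm_eq_iInf_iff_real_inner_le_zero hK hd).1 hproj w hw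
  rw [zero_sub, inner_neg_left, inner_sub_right, real_inner_self_eq_norm_sq] at hvar
  linarith

theorem stmt_5_general {n : ℕ} (g₁ g₂ : EuclideanSpace ℝ (Fin n)) (α : ℝ)
    (hα : α ∈ Set.Icc (0 : ℝ) 1)
    (hmin : ∀ β ∈ Set.Icc (0 : ℝ) 1,
      ‖α • g₁ + (1 - α) • g₂‖ ^ 2 ≤ ‖β • g₁ + (1 - β) • g₂‖ ^ 2) :
    min (inner ℝ (α • g₁ + (1 - α) • g₂) g₁ : ℝ) (inner ℝ (α • g₁ + (1 - α) • g₂) g₂ : ℝ)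
      ≥ ‖α • g₁ + (1 - α) • g₂‖ ^ 2 ∧
    (inner ℝ (‖α • g₁ + (1 - α) • g₂‖⁻¹ • (α • g₁ + (1 - α) • g₂)) g₁ : ℝ) ≥ 0 ∧
    (inner ℝ (‖α • g₁ + (1 - α) • g₂‖⁻¹ • (α • g₁ + (1 - α) • g₂)) g₂ : ℝ) ≥ 0 := by
  set d := α • g₁ + (1 - α) • g₂
  have hd : d ∈ segment ℝ g₁ g₂ := ⟨α, 1 - α, hα.1, by linarith [hα.2], by ring, rfl⟩
  have hdmin : IsMinOn (‖·‖) (segment ℝ g₁ g₂) d := by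
    rintro _ ⟨β, γ, hβ, hγ, hβγ, rfl⟩
    obtain rfl : γ = 1 - β := by linarith
    exact (pow_le_pow_iff_left₀ (norm_nonneg _) (norm_nonneg _) two_ne_zero).1
      (hmin β ⟨hβ, by linarith⟩)
  have h₁ := sq_norm_le_inner_of_isMinOn_norm (convex_segment g₁ g₂) hd hdmin
    (left_mem_segment ℝ g₁ g₂)
  have h₂ := sq_norm_le_inner_of_isMinOn_norm (convex_segment g₁ g₂) hd hdmin
    (right_mem_segment ℝ g₁ g₂)
  refine ⟨le_min h₁ h₂, ?_, ?_⟩ <;> rw [real_inner_smul_left]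
  · exact mul_nonneg (inv_nonneg.2 (norm_nonneg d)) ((sq_nonneg _).trans h₁)
  · exact mul_nonneg (inv_nonneg.2 (norm_nonneg d)) ((sq_nonneg _).trans h₂)

/-- The MGDA combination `d* = α* g₁ + (1−α*) g₂` (with `α*` a minimizer of the MGDA
objective over `[0,1]` and `d* ≠ 0`) satisfies `min(⟨d*,g₁⟩, ⟨d*,g₂⟩) ≥ ‖d*‖²`, so the
normalized direction `d*/‖d*‖` has nonnegative inner product with both `g₁` and `g₂`. -/
theorem stmt_5 {n : ℕ} (g₁ g₂ : EuclideanSpace ℝ (Fin n)) (α : ℝ)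
    (hα : α ∈ Set.Icc (0 : ℝ) 1)
    (hmin : ∀ β ∈ Set.Icc (0 : ℝ) 1,
      ‖α • g₁ + (1 - α) • g₂‖ ^ 2 ≤ ‖β • g₁ + (1 - β) • g₂‖ ^ 2)
    (hd : α • g₁ + (1 - α) • g₂ ≠ 0) :
    min (inner ℝ (α • g₁ + (1 - α) • g₂) g₁ : ℝ) (inner ℝ (α • g₁ + (1 - α) • g₂) g₂ : ℝ)
      ≥ ‖α • g₁ + (1 - α) • g₂‖ ^ 2 ∧
    (inner ℝ (‖α • g₁ + (1 - α) • g₂‖⁻¹ • (α • g₁ + (1 - α) • g₂)) g₁ : ℝ) ≥ 0 ∧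
    (inner ℝ (‖α • g₁ + (1 - α) • g₂‖⁻¹ • (α • g₁ + (1 - α) • g₂)) g₂ : ℝ) ≥ 0 :=
  stmt_5_general g₁ g₂ α hα hmin
end
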